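/- (Proposition 3, horizontal variant: ULA-to-URA expansion.) Let N, M ≥ 1, let (u, v) be a Golay complementary pair of unimodular sequences of length N, and let w_PA, w_PB : {0,…,M−1} → ℂ be arbitrary sequences. Define N×2M matrices W_A, W_B by: for 0 ≤ n ≤ N−1 and 0 ≤ m ≤ M−1, W_A(n,m) = u(n)·w_PA(m), W_A(n,M+m) = −v(n)·conj(w_PB(M−1−m)), W_B(n,m) = u(n)·w_PB(m), W_B(n,M+m) = v(n)·conj(w_PA(M−1−m)). Then for all ψ_y, ψ_z ∈ ℝ, |F_{W_A}(ψ_y,ψ_z)|² + |F_{W_B}(ψ_y,ψ_z)|² = 2N·( |F_{w_PA}(ψ_y)|² + |F_{w_PB}(ψ_y)|² ), where F_{w_PA}, F_{w_PB} denote one-dimensional array factors. -/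

import Mathlib

/-- The one-dimensional array factor of a length-`M` sequence `u` at spatial
frequency `ψ`: `F_u(ψ) = Σ_{m=0}^{M-1} u(m) · exp(i·m·ψ)`. -/
noncomputable def arrayFactor (M : ℕ) (u : ℕ → ℂ) (ψ : ℝ) : ℂ :=
  ∑ m ∈ Finset.range M, u m * Complex.exp (Complex.I * (m : ℂ) * (ψ : ℂ))

/-- The aperiodic autocorrelation of a length-`M` sequence `u` at shift `τ`:
`R_u(τ) = Σ_{m=0}^{M-1-τ} u(m) · conj(u(m+τ))`. -/
noncomputable def aacf (M : ℕ) (u : ℕ → ℂ) (τ : ℕ) : ℂ :=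
  ∑ m ∈ Finset.range (M - τ), u m * (starRingEnd ℂ) (u (m + τ))

/-- The two-dimensional array factor of an `N×M` matrix `W` at `(ψ_y, ψ_z)`:
`F_W(ψ_y,ψ_z) = Σ_{n=0}^{N-1} Σ_{m=0}^{M-1} W(n,m) · exp(i·(n·ψ_z + m·ψ_y))`. -/
noncomputable def arrayFactor2 (N M : ℕ) (W : ℕ → ℕ → ℂ) (ψy ψz : ℝ) : ℂ :=
  ∑ n ∈ Finset.range N, ∑ m ∈ Finset.range M,
    W n m * Complex.exp (Complex.I * ((n : ℂ) * (ψz : ℂ) + (m : ℂ) * (ψy : ℂ)))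

/-- The two-dimensional aperiodic autocorrelation of an `N×M` matrix `W` at integer
shifts `(τ_n, τ_m)`: the sum of `W(n,m)·conj(W(n+τ_n, m+τ_m))` over all pairs
`(n,m)` with `0 ≤ n, n+τ_n ≤ N−1` and `0 ≤ m, m+τ_m ≤ M−1`. -/
noncomputable def aacf2 (N M : ℕ) (W : ℕ → ℕ → ℂ) (τn τm : ℤ) : ℂ :=
  ∑ n ∈ Finset.range N, ∑ m ∈ Finset.range M,
    if 0 ≤ (n : ℤ) + τn ∧ (n : ℤ) + τn < (N : ℤ) ∧
        0 ≤ (m : ℤ) + τm ∧ (m : ℤ) + τm < (M : ℤ) then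
      W n m * (starRingEnd ℂ) (W ((n : ℤ) + τn).toNat ((m : ℤ) + τm).toNat)
    else 0

/-- `(U, V)` is a Golay complementary array pair of `N×M` matrices: the sum of their
two-dimensional aperiodic autocorrelations vanishes at every nonzero shift. -/
def IsGolayArrayPair (N M : ℕ) (U V : ℕ → ℕ → ℂ) : Prop :=
  ∀ τn τm : ℤ, |τn| ≤ (N : ℤ) - 1 → |τm| ≤ (M : ℤ) - 1 → ¬(τn = 0 ∧ τm = 0) →
    aacf2 N M U τn τm + aacf2 N M V τn τm = 0

/-!
Splitting the columns into the two blocks factors both array factors: with `P = F_u(ψ_z)`,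
`Q = F_v(ψ_z)`, `A = F_{w_PA}(ψ_y)`, `B = F_{w_PB}(ψ_y)` and a unimodular phase `c` produced by
the conjugate reversal, `F_{W_A} = P A - c Q conj B` and `F_{W_B} = P B + c Q conj A`. The
Alamouti identity turns the sum of their squared moduli into `(|P|² + |Q|²)(|A|² + |B|²)`.
Finally `|P|² + |Q|² = 2N`: grouping the terms of `|F_u|²` by lag gives
`N + 2 Re Σ_τ R_u(τ) e^{-iτψ}`, and the lag parts of `u` and `v` cancel.
-/

open Finset ComplexConjugate

section TriangleSums

variable {β : Type*} [AddCommMonoid β]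

theorem Finset.sum_range_sum_Ico_succ_eq_sum_shift (f : ℕ → ℕ → β) (N : ℕ) :
    ∑ n ∈ range N, ∑ m ∈ Ico (n + 1) N, f n m =
      ∑ τ ∈ Ico 1 N, ∑ n ∈ range (N - τ), f n (n + τ) := by
  have shift : ∀ n, ∑ m ∈ Ico (n + 1) N, f n m = ∑ τ ∈ Ico 1 (N - n), f n (n + τ) := by
    intro n
    rcases le_or_gt N n with h | h
    · rw [Ico_eq_empty_of_le (by omega), Ico_eq_empty_of_le (by omega), sum_empty, sum_empty]
    · rw [sum_Ico_add, add_comm 1 n, Nat.sub_add_cancel h.le]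
  simp_rw [shift]
  exact sum_comm' (by simp only [mem_range, mem_Ico]; omega)

theorem Finset.sum_range_sum_range_eq_sum_diag_add_sum_shift (f : ℕ → ℕ → β) (N : ℕ) :
    ∑ n ∈ range N, ∑ m ∈ range N, f n m =
      ∑ n ∈ range N, f n n +
        ∑ τ ∈ Ico 1 N, ∑ n ∈ range (N - τ), (f n (n + τ) + f (n + τ) n) := by
  have split : ∀ n ∈ range N, ∑ m ∈ range N, f n m =
      ∑ m ∈ range n, f n m + f n n + ∑ m ∈ Ico (n + 1) N, f n m := by
    intro n hn
    rw [← sum_range_succ, sum_range_add_sum_Ico _ (mem_range.1 hn)]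
  have lower : ∑ n ∈ range N, ∑ m ∈ range n, f n m =
      ∑ m ∈ range N, ∑ n ∈ Ico (m + 1) N, f n m :=
    sum_comm' (by simp only [mem_range, mem_Ico]; omega)
  rw [sum_congr rfl split, sum_add_distrib, sum_add_distrib, lower,
    sum_range_sum_Ico_succ_eq_sum_shift, sum_range_sum_Ico_succ_eq_sum_shift]
  simp only [sum_add_distrib]
  abel

end TriangleSums

open Complex

theorem mul_exp_mul_conj_mul_exp (a b : ℂ) (n m : ℕ) (ψ : ℝ) :
    a * exp (I * n * ψ) * conj (b * exp (I * m * ψ)) = a * conj b * exp (I * (n - m) * ψ) := by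
  rw [map_mul, ← exp_conj, mul_mul_mul_comm, ← exp_add]
  simp only [map_mul, conj_I, map_natCast, conj_ofReal]
  ring_nf

theorem sq_norm_arrayFactor (N : ℕ) (u : ℕ → ℂ) (ψ : ℝ) :
    ‖arrayFactor N u ψ‖ ^ 2 = ∑ n ∈ range N, ‖u n‖ ^ 2 +
      2 * (∑ τ ∈ Ico 1 N, aacf N u τ * exp (-(I * τ * ψ))).re := by
  have diag : ∀ n, u n * exp (I * n * ψ) * conj (u n * exp (I * n * ψ)) = (‖u n‖ ^ 2 : ℝ) := by
    intro n
    rw [mul_exp_mul_conj_mul_exp, mul_conj', sub_self, mul_zero, zero_mul, exp_zero, mul_one,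
      ofReal_pow]
  have shift : ∀ n τ : ℕ,
      u n * exp (I * n * ψ) * conj (u (n + τ) * exp (I * ↑(n + τ) * ψ)) +
        u (n + τ) * exp (I * ↑(n + τ) * ψ) * conj (u n * exp (I * n * ψ)) =
      u n * conj (u (n + τ)) * exp (-(I * τ * ψ)) +
        conj (u n * conj (u (n + τ)) * exp (-(I * τ * ψ))) := by
    intro n τ
    rw [mul_exp_mul_conj_mul_exp, mul_exp_mul_conj_mul_exp, map_mul, map_mul, conj_conj,
      ← exp_conj]
    simp only [map_neg, map_mul, conj_I, map_natCast, conj_ofReal]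
    push_cast
    ring_nf
  apply ofReal_injective
  rw [ofReal_pow, ← mul_conj', arrayFactor, map_sum, sum_mul_sum,
    sum_range_sum_range_eq_sum_diag_add_sum_shift]
  simp only [diag, shift, sum_add_distrib, ← map_sum]
  rw [add_conj]
  simp only [aacf, sum_mul]
  push_cast
  ring

theorem sum_range_sq_norm_of_unimodular {N : ℕ} {u : ℕ → ℂ} (hu : ∀ n < N, ‖u n‖ = 1) :
    ∑ n ∈ range N, ‖u n‖ ^ 2 = N := by
  rw [sum_congr rfl fun n hn => by rw [hu n (mem_range.1 hn), one_pow]]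
  simp

theorem sq_norm_arrayFactor_add_of_golay {N : ℕ} {u v : ℕ → ℂ}
    (hu : ∀ n < N, ‖u n‖ = 1) (hv : ∀ n < N, ‖v n‖ = 1)
    (hGolay : ∀ τ, 1 ≤ τ → τ < N → aacf N u τ + aacf N v τ = 0) (ψ : ℝ) :
    ‖arrayFactor N u ψ‖ ^ 2 + ‖arrayFactor N v ψ‖ ^ 2 = 2 * N := by
  have cancel : ∑ τ ∈ Ico 1 N, aacf N u τ * exp (-(I * τ * ψ)) +
      ∑ τ ∈ Ico 1 N, aacf N v τ * exp (-(I * τ * ψ)) = 0 := by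
    rw [← sum_add_distrib]
    refine sum_eq_zero fun τ hτ => ?_
    obtain ⟨hτ1, hτN⟩ := mem_Ico.1 hτ
    rw [← add_mul, hGolay τ hτ1 hτN, zero_mul]
  have cancel_re := congrArg re cancel
  rw [add_re, zero_re] at cancel_re
  rw [sq_norm_arrayFactor, sq_norm_arrayFactor, sum_range_sq_norm_of_unimodular hu,
    sum_range_sq_norm_of_unimodular hv]
  linear_combination 2 * cancel_re

theorem arrayFactor_neg (M : ℕ) (u : ℕ → ℂ) (ψ : ℝ) :
    arrayFactor M (fun m => -u m) ψ = -arrayFactor M u ψ := by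
  simp only [arrayFactor, neg_mul, sum_neg_distrib]

theorem arrayFactor_conj_reverse (M : ℕ) (q : ℕ → ℂ) (ψ : ℝ) :
    arrayFactor M (fun m => conj (q (M - 1 - m))) ψ =
      exp (I * (M - 1) * ψ) * conj (arrayFactor M q ψ) := by
  rw [arrayFactor, ← sum_range_reflect, arrayFactor, map_sum, mul_sum]
  refine sum_congr rfl fun j hj => ?_
  have hj : j < M := mem_range.1 hj
  rw [Nat.sub_sub_self (by omega), map_mul, ← exp_conj, mul_left_comm, ← exp_add,
    Nat.cast_sub (by omega), Nat.cast_sub (by omega)]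
  simp only [map_mul, conj_I, map_natCast, conj_ofReal, Nat.cast_one]
  ring_nf

theorem arrayFactor2_congr {N M : ℕ} {W W' : ℕ → ℕ → ℂ}
    (h : ∀ n < N, ∀ m < M, W n m = W' n m) (ψy ψz : ℝ) :
    arrayFactor2 N M W ψy ψz = arrayFactor2 N M W' ψy ψz :=
  sum_congr rfl fun n hn => sum_congr rfl fun m hm => by
    rw [h n (mem_range.1 hn) m (mem_range.1 hm)]

theorem arrayFactor2_add_cols (N M₁ M₂ : ℕ) (W : ℕ → ℕ → ℂ) (ψy ψz : ℝ) :
    arrayFactor2 N (M₁ + M₂) W ψy ψz = arrayFactor2 N M₁ W ψy ψz +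
      exp (I * M₁ * ψy) * arrayFactor2 N M₂ (fun n m => W n (M₁ + m)) ψy ψz := by
  simp only [arrayFactor2, sum_range_add, sum_add_distrib, mul_sum]
  congr 1
  refine sum_congr rfl fun n _ => sum_congr rfl fun m _ => ?_
  rw [mul_left_comm, ← exp_add]
  push_cast
  ring_nf

theorem arrayFactor2_mul (N M : ℕ) (x y : ℕ → ℂ) (ψy ψz : ℝ) :
    arrayFactor2 N M (fun n m => x n * y m) ψy ψz = arrayFactor N x ψz * arrayFactor M y ψy := by
  rw [arrayFactor2, arrayFactor, arrayFactor, sum_mul_sum]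
  refine sum_congr rfl fun n _ => sum_congr rfl fun m _ => ?_
  rw [mul_add, exp_add]
  ring_nf

theorem arrayFactor2_horizontal_expansion {N M : ℕ} {x y p q : ℕ → ℂ} {W : ℕ → ℕ → ℂ}
    (hleft : ∀ n < N, ∀ m < M, W n m = x n * p m)
    (hright : ∀ n < N, ∀ m < M, W n (M + m) = y n * conj (q (M - 1 - m))) (ψy ψz : ℝ) :
    arrayFactor2 N (2 * M) W ψy ψz = arrayFactor N x ψz * arrayFactor M p ψy +
      arrayFactor N y ψz * (exp (I * M * ψy) * exp (I * (M - 1) * ψy)) *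
        conj (arrayFactor M q ψy) := by
  rw [two_mul, arrayFactor2_add_cols, arrayFactor2_congr hleft,
    arrayFactor2_congr (W' := fun n m => y n * conj (q (M - 1 - m))) hright, arrayFactor2_mul,
    arrayFactor2_mul, arrayFactor_conj_reverse]
  ring

theorem sq_norm_alamouti (p q a b : ℂ) :
    ‖p * a - q * conj b‖ ^ 2 + ‖p * b + q * conj a‖ ^ 2 =
      (‖p‖ ^ 2 + ‖q‖ ^ 2) * (‖a‖ ^ 2 + ‖b‖ ^ 2) := by
  simp only [← normSq_eq_norm_sq, normSq_apply, sub_re, sub_im, add_re, add_im, mul_re, mul_im,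
    conj_re, conj_im]
  ring

theorem ula_to_ura_expansion_horizontal_general (N M : ℕ)
    (u v wPA wPB : ℕ → ℂ) (WA WB : ℕ → ℕ → ℂ)
    (hu : ∀ n < N, ‖u n‖ = 1) (hv : ∀ n < N, ‖v n‖ = 1)
    (hGolay : ∀ τ, 1 ≤ τ → τ < N → aacf N u τ + aacf N v τ = 0)
    (hA1 : ∀ n < N, ∀ m < M, WA n m = u n * wPA m)
    (hA2 : ∀ n < N, ∀ m < M,
      WA n (M + m) = -(v n * (starRingEnd ℂ) (wPB (M - 1 - m))))
    (hB1 : ∀ n < N, ∀ m < M, WB n m = u n * wPB m)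
    (hB2 : ∀ n < N, ∀ m < M,
      WB n (M + m) = v n * (starRingEnd ℂ) (wPA (M - 1 - m)))
    (ψy ψz : ℝ) :
    ‖arrayFactor2 N (2 * M) WA ψy ψz‖ ^ 2 +
        ‖arrayFactor2 N (2 * M) WB ψy ψz‖ ^ 2 =
      2 * N * (‖arrayFactor M wPA ψy‖ ^ 2 +
                ‖arrayFactor M wPB ψy‖ ^ 2) := by
  have hA := arrayFactor2_horizontal_expansion (y := fun n => -v n) hA1
    (fun n hn m hm => by rw [hA2 n hn m hm, neg_mul]) ψy ψz
  have hB := arrayFactor2_horizontal_expansion hB1 hB2 ψy ψz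
  set c := exp (I * M * ψy) * exp (I * (M - 1) * ψy)
  have hc : ‖c‖ = 1 := by simp [c, norm_exp]
  rw [hA, hB, arrayFactor_neg, neg_mul, neg_mul, ← sub_eq_add_neg, sq_norm_alamouti, norm_mul,
    hc, mul_one, sq_norm_arrayFactor_add_of_golay hu hv hGolay]

/-- Proposition 3, horizontal variant: expanding a one-dimensional protoarray by a
Golay complementary pair of expanders appended horizontally yields a rectangular
array whose sum power pattern is `2N` times that of the protoarray. -/
theorem ula_to_ura_expansion_horizontal (N M : ℕ) (hN : 1 ≤ N) (hM : 1 ≤ M)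
    (u v wPA wPB : ℕ → ℂ) (WA WB : ℕ → ℕ → ℂ)
    (hu : ∀ n < N, ‖u n‖ = 1) (hv : ∀ n < N, ‖v n‖ = 1)
    (hGolay : ∀ τ, 1 ≤ τ → τ < N → aacf N u τ + aacf N v τ = 0)
    (hA1 : ∀ n < N, ∀ m < M, WA n m = u n * wPA m)
    (hA2 : ∀ n < N, ∀ m < M,
      WA n (M + m) = -(v n * (starRingEnd ℂ) (wPB (M - 1 - m))))
    (hB1 : ∀ n < N, ∀ m < M, WB n m = u n * wPB m)
    (hB2 : ∀ n < N, ∀ m < M,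
      WB n (M + m) = v n * (starRingEnd ℂ) (wPA (M - 1 - m)))
    (ψy ψz : ℝ) :
    ‖arrayFactor2 N (2 * M) WA ψy ψz‖ ^ 2 +
        ‖arrayFactor2 N (2 * M) WB ψy ψz‖ ^ 2 =
      2 * N * (‖arrayFactor M wPA ψy‖ ^ 2 +
                ‖arrayFactor M wPB ψy‖ ^ 2) :=
  ula_to_ura_expansion_horizontal_general N M u v wPA wPB WA WB hu hv hGolay hA1 hA2 hB1 hB2 ψy ψz
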